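/- arXiv:1701.07576 — 3 statements merged into one kernel-verified Lean document; each statement's English description precedes it below -/
import Mathlib

section
/- Let P, N₁, N₂, N₃ be positive reals with N₁ ≤ N₂ ≤ N₃ ≤ P/3, and let α₂ ∈ [0,1] with α₂·P ≥ N₃. Set α₀ = N₂/P and c₁₁ = (1−α₀)/(2−α₀). Then (1/2)·log(c₁₁ + (P−N₂)/(α₂P+2N₂)) > (1/2)·log(P/(3·α₂·P)). -/
/-!
Normalise by `P`: with `a = N₂/P ≤ 1/3` and `a ≤ α₂`, the first term `(1-a)/(2-a)` is at least
`2/5`, while `(1-a)/(α₂+2a) ≥ (1-a)/(3α₂) ≥ 1/(3α₂) - 1/3`. Since `2/5 > 1/3`, the argument of the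
left logarithm exceeds `1/(3α₂)`, and `logb 2` is strictly increasing.
-/

lemma two_fifths_le_one_sub_div_two_sub {a : ℝ} (ha : a ≤ 1 / 3) :
    2 / 5 ≤ (1 - a) / (2 - a) := by
  rw [le_div_iff₀ (by linarith)]
  linarith

lemma one_div_three_mul_sub_le_one_sub_div {a b : ℝ} (ha₀ : 0 ≤ a) (ha₁ : a ≤ 1) (hab : a ≤ b)
    (hb : 0 < b) : 1 / (3 * b) - 1 / 3 ≤ (1 - a) / (b + 2 * a) :=
  calc 1 / (3 * b) - 1 / 3 ≤ 1 / (3 * b) - a / (3 * b) := by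
        have : a / (3 * b) ≤ 1 / 3 := by rw [div_le_iff₀ (by positivity)]; linarith
        linarith
    _ = (1 - a) / (3 * b) := by ring
    _ ≤ (1 - a) / (b + 2 * a) := by
        gcongr
        linarith

lemma one_div_three_mul_lt_add {a b : ℝ} (ha₀ : 0 ≤ a) (ha₁ : a ≤ 1 / 3) (hab : a ≤ b)
    (hb : 0 < b) : 1 / (3 * b) < (1 - a) / (2 - a) + (1 - a) / (b + 2 * a) := by
  linarith [two_fifths_le_one_sub_div_two_sub ha₁,
    one_div_three_mul_sub_le_one_sub_div ha₀ (by linarith) hab hb]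

theorem type1_gap_case1_general (P N₁ N₂ N₃ α₂ : ℝ)
    (hN₁ : 0 < N₁) (h12 : N₁ ≤ N₂) (h23 : N₂ ≤ N₃) (h3P : N₃ ≤ P / 3)
    (hP : 0 < P) (hα₂P : α₂ * P ≥ N₃) :
    (1/2) * Real.logb 2 ((1 - N₂/P) / (2 - N₂/P) + (P - N₂) / (α₂ * P + 2 * N₂))
      > (1/2) * Real.logb 2 (P / (3 * α₂ * P)) := by
  have hN₂ : 0 < N₂ := hN₁.trans_le h12
  have hα₂ : 0 < α₂ := pos_of_mul_pos_left (hN₂.trans_le (h23.trans hα₂P)) hP.le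
  have ha₁ : N₂ / P ≤ 1 / 3 := by rw [div_le_iff₀ hP]; linarith
  have hab : N₂ / P ≤ α₂ := by rw [div_le_iff₀ hP]; linarith
  have hnorm : (P - N₂) / (α₂ * P + 2 * N₂) = (1 - N₂ / P) / (α₂ + 2 * (N₂ / P)) := by
    field_simp
  have hrhs : P / (3 * α₂ * P) = 1 / (3 * α₂) := by
    field_simp
  rw [hnorm, hrhs]
  have key := one_div_three_mul_lt_add (div_nonneg hN₂.le hP.le) ha₁ hab hα₂
  have := Real.logb_lt_logb one_lt_two (by positivity) key
  linarith

theorem type1_gap_case1 (P N₁ N₂ N₃ α₂ : ℝ)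
    (hN₁ : 0 < N₁) (h12 : N₁ ≤ N₂) (h23 : N₂ ≤ N₃) (h3P : N₃ ≤ P / 3)
    (hP : 0 < P) (hα₂0 : 0 ≤ α₂) (hα₂1 : α₂ ≤ 1) (hα₂P : α₂ * P ≥ N₃) :
    (1/2) * Real.logb 2 ((1 - N₂/P) / (2 - N₂/P) + (P - N₂) / (α₂ * P + 2 * N₂))
      > (1/2) * Real.logb 2 (P / (3 * α₂ * P)) :=
  type1_gap_case1_general P N₁ N₂ N₃ α₂ hN₁ h12 h23 h3P hP hα₂P
end

section
/- Let P, N₂ > 0 and α₁, α₂, α₀ ∈ [0,1] with α₁ ≤ 3/8, α₁ ≥ 3(α₀+α₂), and α₀P = N₂. Then (1/2)·log(c₁₁ + (1−α₀−α₁−α₂)P / ((α₀+α₁+2α₂)P + N₂)) ≥ (1/2)·log((17/40)/α₁), where c₁₁ = (1−α₀−α₁−α₂)/(2−α₀−α₁−α₂). -/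
/-! With `s = α₀ + α₁ + α₂`, the constraint `3(α₀ + α₂) ≤ α₁ ≤ 3/8` gives `s ≤ 4α₁/3 ≤ 1/2`, hence
`c₁₁ = (1 - s)/(2 - s) ≥ 1/3`. Since `N₂ = α₀P`, the interference term has denominator
`(2α₀ + α₁ + 2α₂)P ≤ (5/3)α₁P` and numerator `(1 - s)P ≥ (1 - 4α₁/3)P`, so it is at least
`(3 - 4α₁)/(5α₁)`. Finally `1/3 + (3 - 4α₁)/(5α₁) = (9 - 7α₁)/(15α₁) ≥ (17/40)/α₁` exactly when
`α₁ ≤ 3/8`, and `logb 2` is monotone. -/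

lemma one_third_le_one_sub_div_two_sub {s : ℝ} (hs : s ≤ 1/2) : 1/3 ≤ (1 - s) / (2 - s) := by
  rw [le_div_iff₀ (by linarith)]
  linarith

lemma div_le_one_third_add_div {a : ℝ} (ha : 0 < a) (ha' : a ≤ 3/8) :
    (17/40) / a ≤ 1/3 + (3 - 4*a) / (5*a) := by
  rw [div_add_div _ _ (by norm_num) (by positivity), div_le_div_iff₀ ha (by positivity)]
  nlinarith

lemma div_le_interference_ratio {P α₀ α₁ α₂ : ℝ} (hP : 0 < P) (hα₀ : 0 ≤ α₀) (hα₂ : 0 ≤ α₂)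
    (hα₁ : 0 < α₁) (hα₁' : α₁ ≤ 3/4) (h : 3 * (α₀ + α₂) ≤ α₁) :
    (3 - 4*α₁) / (5*α₁) ≤ (1 - α₀ - α₁ - α₂) * P / ((α₀ + α₁ + 2*α₂) * P + α₀ * P) :=
  calc (3 - 4*α₁) / (5*α₁) = ((1 - 4/3*α₁) * P) / ((5/3*α₁) * P) := by
        field_simp
    _ ≤ _ := by
      apply div_le_div₀ <;> nlinarith

theorem type4_largeR1_gap_general (P N₂ α₀ α₁ α₂ : ℝ)
    (hP : 0 < P) (hN₂ : 0 < N₂)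
    (hα₀0 : 0 ≤ α₀) (hα₂0 : 0 ≤ α₂)
    (h1 : α₁ ≤ 3/8) (h2 : α₁ ≥ 3 * (α₀ + α₂)) (h3 : α₀ * P = N₂) :
    (1/2) * Real.logb 2 ((1 - α₀ - α₁ - α₂) / (2 - α₀ - α₁ - α₂)
        + (1 - α₀ - α₁ - α₂) * P / ((α₀ + α₁ + 2*α₂) * P + N₂))
      ≥ (1/2) * Real.logb 2 ((17/40) / α₁) := by
  have hα₀ : 0 < α₀ := pos_of_mul_pos_left (h3 ▸ hN₂) hP.le
  have hα₁ : 0 < α₁ := by linarith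
  subst h3
  have hc₁₁ : 1/3 ≤ (1 - α₀ - α₁ - α₂) / (2 - α₀ - α₁ - α₂) := by
    simpa only [sub_sub] using one_third_le_one_sub_div_two_sub (s := α₀ + α₁ + α₂) (by linarith)
  have hratio := div_le_interference_ratio hP hα₀0 hα₂0 hα₁ (by linarith) h2
  have hgap := div_le_one_third_add_div hα₁ h1
  gcongr (1/2) * ?_
  refine Real.logb_le_logb_of_le one_lt_two (by positivity) ?_
  linarith

theorem type4_largeR1_gap (P N₂ α₀ α₁ α₂ : ℝ)
    (hP : 0 < P) (hN₂ : 0 < N₂)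
    (hα₀0 : 0 ≤ α₀) (hα₀1 : α₀ ≤ 1) (hα₁0 : 0 ≤ α₁) (hα₁1 : α₁ ≤ 1)
    (hα₂0 : 0 ≤ α₂) (hα₂1 : α₂ ≤ 1)
    (h1 : α₁ ≤ 3/8) (h2 : α₁ ≥ 3 * (α₀ + α₂)) (h3 : α₀ * P = N₂) :
    (1/2) * Real.logb 2 ((1 - α₀ - α₁ - α₂) / (2 - α₀ - α₁ - α₂)
        + (1 - α₀ - α₁ - α₂) * P / ((α₀ + α₁ + 2*α₂) * P + N₂))
      ≥ (1/2) * Real.logb 2 ((17/40) / α₁) :=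
  type4_largeR1_gap_general P N₂ α₀ α₁ α₂ hP hN₂ hα₀0 hα₂0 h1 h2 h3
end

section
/- For positive reals P, N₁, N₂, N₃ with N₁ ≤ N₂ ≤ N₃: (1/2)·log(1 + (P−N₂−N₃)/(N₁+N₂+2N₃)) + (1/2)·log(1 + N₃/(N₁+N₂)) + (1/2)·log(1 + N₂/N₁) ≥ (1/2)·log(2 + P/N₁) − 1/2, provided P ≥ N₂ + N₃. -/
/-! The three layer rates telescope: the product of their SNR factors is
`(P + N₁ + N₃)(N₁ + N₂ + N₃) / ((N₁ + N₂ + 2N₃) N₁)`, and twice this exceeds `2 + P/N₁` by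
`(P(N₁ + N₂) + 2N₃(N₂ + N₃)) / ((N₁ + N₂ + 2N₃) N₁) ≥ 0`. Taking `(1/2) log₂` turns the factor
two into the half-bit gap. -/

open Real

lemma two_mul_layer_product_sub {P N₁ N₂ N₃ : ℝ} (hN₁ : 0 < N₁) (hN₂ : 0 ≤ N₂) (hN₃ : 0 ≤ N₃) :
    2 * ((1 + (P - N₂ - N₃) / (N₁ + N₂ + 2*N₃)) * (1 + N₃ / (N₁ + N₂)) * (1 + N₂ / N₁))
      - (2 + P / N₁)
      = (P * (N₁ + N₂) + 2 * N₃ * (N₂ + N₃)) / ((N₁ + N₂ + 2*N₃) * N₁) := by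
  have h₁₂ : N₁ + N₂ ≠ 0 := by positivity
  have h₁₂₃ : N₁ + N₂ + 2*N₃ ≠ 0 := by positivity
  field_simp
  ring

lemma two_add_div_le_two_mul_layer_product {P N₁ N₂ N₃ : ℝ} (hP : 0 ≤ P) (hN₁ : 0 < N₁)
    (hN₂ : 0 ≤ N₂) (hN₃ : 0 ≤ N₃) :
    2 + P / N₁
      ≤ 2 * ((1 + (P - N₂ - N₃) / (N₁ + N₂ + 2*N₃)) * (1 + N₃ / (N₁ + N₂)) * (1 + N₂ / N₁)) := by
  rw [← sub_nonneg, two_mul_layer_product_sub hN₁ hN₂ hN₃]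
  positivity

lemma half_logb_two_sub_half_le {a b c y : ℝ} (ha : 0 < a) (hb : 0 < b) (hc : 0 < c)
    (hy : 0 < y) (h : y ≤ 2 * (a * b * c)) :
    (1/2) * logb 2 y - 1/2 ≤ (1/2) * logb 2 a + (1/2) * logb 2 b + (1/2) * logb 2 c := by
  have hlog : logb 2 y ≤ 1 + logb 2 a + logb 2 b + logb 2 c := by
    calc logb 2 y ≤ logb 2 (2 * (a * b * c)) := logb_le_logb_of_le one_lt_two hy h
      _ = 1 + logb 2 a + logb 2 b + logb 2 c := by
        rw [logb_mul two_ne_zero (by positivity), logb_self_eq_one one_lt_two,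
          logb_mul (by positivity) hc.ne', logb_mul ha.ne' hb.ne']
        ring
  linarith

theorem type5_user1_layers_general (P N₁ N₂ N₃ : ℝ)
    (hN₁ : 0 < N₁) (h12 : N₁ ≤ N₂) (h23 : N₂ ≤ N₃)
    (hP23 : P ≥ N₂ + N₃) :
    (1/2) * Real.logb 2 (1 + (P - N₂ - N₃) / (N₁ + N₂ + 2*N₃))
      + (1/2) * Real.logb 2 (1 + N₃ / (N₁ + N₂))
      + (1/2) * Real.logb 2 (1 + N₂ / N₁)
      ≥ (1/2) * Real.logb 2 (2 + P / N₁) - 1/2 := by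
  have hN₂ : 0 ≤ N₂ := by linarith
  have hN₃ : 0 ≤ N₃ := by linarith
  have hP : 0 ≤ P := by linarith
  have hP₁ : 0 < 1 + (P - N₂ - N₃) / (N₁ + N₂ + 2*N₃) := by
    have : 0 ≤ P - N₂ - N₃ := by linarith
    positivity
  exact half_logb_two_sub_half_le hP₁ (by positivity) (by positivity) (by positivity)
    (two_add_div_le_two_mul_layer_product hP hN₁ hN₂ hN₃)

theorem type5_user1_layers (P N₁ N₂ N₃ : ℝ)
    (hN₁ : 0 < N₁) (h12 : N₁ ≤ N₂) (h23 : N₂ ≤ N₃) (hP : 0 < P)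
    (hP23 : P ≥ N₂ + N₃) :
    (1/2) * Real.logb 2 (1 + (P - N₂ - N₃) / (N₁ + N₂ + 2*N₃))
      + (1/2) * Real.logb 2 (1 + N₃ / (N₁ + N₂))
      + (1/2) * Real.logb 2 (1 + N₂ / N₁)
      ≥ (1/2) * Real.logb 2 (2 + P / N₁) - 1/2 :=
  type5_user1_layers_general P N₁ N₂ N₃ hN₁ h12 h23 hP23
end
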